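/- arXiv:1211.2025 — 8 statements merged into one kernel-verified Lean document; each statement's English description precedes it below -/
import Mathlib

section
/- The constant e admits the infinite product representation e = ∏_{n=1}^{∞} (1 - 1/τ^n)^{(μ(n) - φ(n))/n}, where τ = (1 + √5)/2 is the golden ratio. -/
/-!
Write `x = τ⁻¹` and `f = μ - φ`. Expanding `-log (1 - x ^ n) = ∑ₖ x ^ (n k) / k` turns
`∑ₙ f n / n * log (1 - x ^ n)` into minus the absolutely convergent double series
`∑_{n,k} f n x ^ (n k) / (n k)`; summing it instead along the fibres of `(n, k) ↦ n k` gives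
`∑ₘ (∑_{d ∣ m} f d) x ^ m / m`. Since `∑_{d ∣ m} μ d = [m = 1]` and `∑_{d ∣ m} φ d = m`, this is
`x - x / (1 - x) = -x ^ 2 / (1 - x)`, which equals `-1` because `x ^ 2 + x = 1`. Hence the
logarithms of the partial products tend to `1`.
-/

open Filter Real Finset Topology

-- The entries with `n = 0` or `k = 0` vanish through division by zero.
noncomputable def logLambertTerm (f : ℕ → ℝ) (x : ℝ) (p : ℕ × ℕ) : ℝ :=
  f p.1 * x ^ (p.1 * p.2) / (p.1 * p.2 : ℕ)

section LogLambert

variable {f : ℕ → ℝ} {x : ℝ}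

theorem norm_logLambertTerm_le {C : ℝ} (hf : ∀ n, |f n| ≤ C * n) (hx : |x| < 1) (p : ℕ × ℕ) :
    ‖logLambertTerm f x p‖ ≤ C * (√|x| ^ p.1 * √|x| ^ p.2) := by
  obtain ⟨n, k⟩ := p
  have hC : 0 ≤ C := by simpa using (abs_nonneg _).trans (hf 1)
  have hy : 0 ≤ √|x| := sqrt_nonneg _
  have hbound : 0 ≤ C * (√|x| ^ n * √|x| ^ k) := by positivity
  rcases Nat.eq_zero_or_pos n with rfl | hn
  · simpa [logLambertTerm] using hbound
  rcases Nat.eq_zero_or_pos k with rfl | hk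
  · simpa [logLambertTerm] using hbound
  have hnk : (0 : ℝ) < n * k := by positivity
  have hpow : |x| ^ (n * k) ≤ √|x| ^ n * √|x| ^ k := by
    rw [← pow_add, ← sq_sqrt (abs_nonneg x), sqrt_sq hy, ← pow_mul]
    exact pow_le_pow_of_le_one hy (sqrt_le_one.mpr hx.le) (by nlinarith)
  calc ‖logLambertTerm f x (n, k)‖ = |f n| / n * (|x| ^ (n * k) / k) := by
        rw [logLambertTerm, norm_div, norm_mul, norm_pow, Nat.cast_mul]
        simp only [norm_eq_abs, abs_of_pos hnk]
        field_simp
    _ ≤ C * (√|x| ^ n * √|x| ^ k) := by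
        gcongr
        · rw [div_le_iff₀ (by positivity)]; exact hf n
        · exact (div_le_self (by positivity) (by exact_mod_cast hk)).trans hpow

theorem summable_logLambertTerm {C : ℝ} (hf : ∀ n, |f n| ≤ C * n) (hx : |x| < 1) :
    Summable (logLambertTerm f x) := by
  have hy : √|x| < 1 := (sqrt_lt' one_pos).mpr (by simpa using hx)
  have hg := summable_geometric_of_lt_one (sqrt_nonneg _) hy
  refine Summable.of_norm_bounded ?_ (norm_logLambertTerm_le hf hx)
  exact (hg.mul_of_nonneg hg (fun _ => by positivity) (fun _ => by positivity)).mul_left C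

theorem hasSum_logLambertTerm_fst (hx : |x| < 1) (n : ℕ) :
    HasSum (fun k => logLambertTerm f x (n, k)) (-(f n / n * log (1 - x ^ n))) := by
  rcases Nat.eq_zero_or_pos n with rfl | hn
  · simp [logLambertTerm, hasSum_zero]
  have hxn : |x ^ n| < 1 := by
    rw [abs_pow]; exact pow_lt_one₀ (abs_nonneg x) hx hn.ne'
  have hterm (k : ℕ) :
      f n / n * ((x ^ n) ^ (k + 1) / (k + 1)) = logLambertTerm f x (n, k + 1) := by
    rw [logLambertTerm, ← pow_mul]
    push_cast
    field_simp
  have h := (hasSum_pow_div_log_of_abs_lt_one hxn).mul_left (f n / n)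
  simp only [hterm, mul_neg] at h
  refine (hasSum_nat_add_iff' 1).mp ?_
  simpa [logLambertTerm] using h

theorem tsum_logLambertTerm_mul_fiber (m : ℕ) :
    ∑' p : (fun p : ℕ × ℕ => p.1 * p.2) ⁻¹' {m}, logLambertTerm f x p =
      (∑ d ∈ m.divisors, f d) * x ^ m / m := by
  rcases eq_or_ne m 0 with rfl | hm
  · rw [Nat.divisors_zero, sum_empty, zero_mul, zero_div]
    refine (tsum_congr fun ⟨p, hp⟩ => ?_).trans tsum_zero
    rw [logLambertTerm, show p.1 * p.2 = 0 from hp, Nat.cast_zero, div_zero]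
  have hfiber : (fun p : ℕ × ℕ => p.1 * p.2) ⁻¹' {m} = ↑m.divisorsAntidiagonal := by
    ext p; simp [hm]
  rw [hfiber, Finset.tsum_subtype', Finset.sum_mul, Finset.sum_div,
    ← Nat.sum_divisorsAntidiagonal (fun d _ => f d * x ^ m / m)]
  refine Finset.sum_congr rfl fun p hp => ?_
  rw [logLambertTerm, (Nat.mem_divisorsAntidiagonal.mp hp).1]

theorem hasSum_mul_log_one_sub_pow {C s : ℝ} (hf : ∀ n, |f n| ≤ C * n) (hx : |x| < 1)
    (hs : HasSum (fun m : ℕ => (∑ d ∈ m.divisors, f d) * x ^ m / m) s) :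
    HasSum (fun n : ℕ => f n / n * log (1 - x ^ n)) (-s) := by
  have htot := (summable_logLambertTerm hf hx).hasSum
  have hfib := htot.tsum_fiberwise (fun p : ℕ × ℕ => p.1 * p.2)
  simp only [tsum_logLambertTerm_mul_fiber] at hfib
  rw [hs.unique hfib]
  simpa using (htot.prod_fiberwise (hasSum_logLambertTerm_fst hx)).neg

end LogLambert

theorem sum_divisors_moebius_sub_totient (m : ℕ) :
    ∑ d ∈ m.divisors, ((ArithmeticFunction.moebius d : ℝ) - Nat.totient d) =
      (if m = 1 then 1 else 0) - m := by
  have hμ := congrArg (· m) (ArithmeticFunction.coe_moebius_mul_coe_zeta (R := ℝ))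
  simp only [ArithmeticFunction.coe_mul_zeta_apply, ArithmeticFunction.intCoe_apply,
    ArithmeticFunction.one_apply] at hμ
  rw [sum_sub_distrib, hμ, ← Nat.cast_sum, Nat.sum_totient]

theorem abs_moebius_sub_totient_le (n : ℕ) :
    |(ArithmeticFunction.moebius n : ℝ) - Nat.totient n| ≤ 2 * n := by
  rcases Nat.eq_zero_or_pos n with rfl | hn
  · simp
  have hμ : |(ArithmeticFunction.moebius n : ℝ)| ≤ 1 := by
    exact_mod_cast ArithmeticFunction.abs_moebius_le_one
  have hφ : (Nat.totient n : ℝ) ≤ n := by exact_mod_cast Nat.totient_le n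
  have h1 : (1 : ℝ) ≤ n := by exact_mod_cast hn
  calc |(ArithmeticFunction.moebius n : ℝ) - Nat.totient n|
      ≤ |(ArithmeticFunction.moebius n : ℝ)| + |(Nat.totient n : ℝ)| := abs_sub _ _
    _ ≤ 2 * n := by rw [Nat.abs_cast]; linarith

theorem hasSum_moebius_sub_totient_mul_log_one_sub_pow {x : ℝ} (hx : |x| < 1) :
    HasSum (fun n : ℕ => ((ArithmeticFunction.moebius n : ℝ) - Nat.totient n) / n *
      log (1 - x ^ n)) (x ^ 2 / (1 - x)) := by
  have hx1 : 1 - x ≠ 0 := by linarith [le_abs_self x]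
  -- The last summand cancels the `m = 0` term of the geometric series.
  have hterm (m : ℕ) : (∑ d ∈ m.divisors, ((ArithmeticFunction.moebius d : ℝ) - Nat.totient d)) *
      x ^ m / m = (if m = 1 then x else 0) - x ^ m + (if m = 0 then 1 else 0) := by
    rw [sum_divisors_moebius_sub_totient]
    rcases eq_or_ne m 0 with rfl | hm
    · simp
    rcases eq_or_ne m 1 with rfl | hm1
    · simp
    rw [if_neg hm1, if_neg hm1, if_neg hm, zero_sub, zero_sub, add_zero]
    field_simp
  have hs := ((hasSum_ite_eq 1 x).sub (hasSum_geometric_of_abs_lt_one hx)).add (hasSum_ite_eq 0 1)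
  simp only [← hterm] at hs
  convert hasSum_mul_log_one_sub_pow abs_moebius_sub_totient_le hx hs using 1
  field_simp
  ring

theorem tendsto_prod_Icc_rpow_of_hasSum_mul_log {a e : ℕ → ℝ} {s : ℝ}
    (ha : ∀ n, 1 ≤ n → 0 < a n) (he : e 0 = 0) (h : HasSum (fun n => e n * log (a n)) s) :
    Tendsto (fun N => ∏ n ∈ Icc 1 N, a n ^ e n) atTop (𝓝 (exp s)) := by
  have hsum : Tendsto (fun N => ∑ n ∈ Icc 1 N, e n * log (a n)) atTop (𝓝 s) := by
    refine (h.tendsto_sum_nat.comp (tendsto_add_atTop_nat 1)).congr fun N => ?_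
    rw [Function.comp_apply, Nat.range_succ_eq_Icc_zero, ← sum_Ioc_add_eq_sum_Icc N.zero_le,
      he, zero_mul, add_zero, ← Icc_add_one_left_eq_Ioc, zero_add]
  refine ((continuous_exp.tendsto s).comp hsum).congr fun N => ?_
  rw [Function.comp_apply, exp_sum]
  refine prod_congr rfl fun n hn => ?_
  rw [rpow_def_of_pos (ha n (mem_Icc.mp hn).1), mul_comm]

theorem one_sub_inv_goldenRatio : 1 - goldenRatio⁻¹ = goldenRatio⁻¹ ^ 2 := by
  rw [inv_goldenRatio]
  linear_combination -goldenConj_sq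

/-- e = ∏_{n=1}^∞ (1 - 1/τ^n)^((μ(n) - φ(n))/n), where τ = (1+√5)/2. -/
theorem golden_product_for_e :
    Filter.Tendsto
      (fun N : ℕ => ∏ n ∈ Finset.Icc 1 N,
        (1 - 1 / ((1 + Real.sqrt 5) / 2) ^ n) ^
          (((ArithmeticFunction.moebius n : ℝ) - (Nat.totient n : ℝ)) / (n : ℝ)))
      Filter.atTop (nhds (Real.exp 1)) := by
  have hx : |goldenRatio⁻¹| < 1 := by
    rw [abs_inv, abs_of_pos goldenRatio_pos]; exact inv_lt_one_of_one_lt₀ one_lt_goldenRatio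
  have hsum := hasSum_moebius_sub_totient_mul_log_one_sub_pow hx
  rw [← one_sub_inv_goldenRatio, div_self (sub_ne_zero.mpr (abs_lt.mp hx).2.ne')] at hsum
  simp only [one_div, ← inv_pow]
  refine tendsto_prod_Icc_rpow_of_hasSum_mul_log (fun n hn => ?_) (by simp) hsum
  rw [sub_pos]
  exact pow_lt_one₀ (by positivity) (abs_lt.mp hx).2 (by omega)
end

section
/- For every real number x with 0 < x < 1, we have - ∑_{k=1}^{∞} (φ(k)/k) · log(1 - x^k) = x/(1 - x). -/
open Real

/-!
Expanding `-log (1 - x ^ k) = ∑_{m ≥ 1} x ^ (k m) / m` turns the series into the double series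
`∑_{k, m ≥ 1} φ(k) / (k m) · x ^ (k m)` of nonnegative terms. Grouping its terms along `k m = n`
and using `∑_{d ∣ n} φ(d) = n` leaves the geometric series `∑_{n ≥ 1} x ^ n = x / (1 - x)`.
-/

theorem hasSum_of_hasSum_sum_divisorsAntidiagonal {f : ℕ × ℕ → ℝ} (hf : 0 ≤ f)
    (hf_zero : ∀ p : ℕ × ℕ, p.1 * p.2 = 0 → f p = 0) {a : ℝ}
    (h : HasSum (fun n : ℕ ↦ ∑ p ∈ n.divisorsAntidiagonal, f p) a) : HasSum f a := by
  have hfiber (n : ℕ) : HasSum (fun p : (fun p : ℕ × ℕ ↦ p.1 * p.2) ⁻¹' {n} ↦ f p)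
      (∑ p ∈ n.divisorsAntidiagonal, f p) := by
    refine hasSum_subtype_iff_indicator.2 ?_
    have hind : ∀ p ∈ n.divisorsAntidiagonal,
        ((fun p : ℕ × ℕ ↦ p.1 * p.2) ⁻¹' {n}).indicator f p = f p := fun p hp ↦
      Set.indicator_of_mem (s := (fun p : ℕ × ℕ ↦ p.1 * p.2) ⁻¹' {n})
        (Nat.mem_divisorsAntidiagonal.1 hp).1 f
    rw [← Finset.sum_congr rfl hind]
    refine hasSum_sum_of_ne_finset_zero fun p hp ↦ Set.indicator_apply_eq_zero.2 fun hpn ↦ ?_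
    rcases eq_or_ne n 0 with rfl | hn
    · exact hf_zero p hpn
    · exact absurd (Nat.mem_divisorsAntidiagonal.2 ⟨hpn, hn⟩) hp
  have hsummable : Summable f :=
    (summable_partition hf fun p ↦ ⟨p.1 * p.2, rfl, fun _ h ↦ h.symm⟩).2
      ⟨fun n ↦ (hfiber n).summable, by simpa only [(hfiber _).tsum_eq] using h.summable⟩
  have hfiberwise := hsummable.hasSum.tsum_fiberwise fun p ↦ p.1 * p.2
  simp only [(hfiber _).tsum_eq] at hfiberwise
  exact h.unique hfiberwise ▸ hsummable.hasSum

theorem sum_divisorsAntidiagonal_totient_div_mul_pow {K : Type*} [Field K] [CharZero K] (x : K)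
    {n : ℕ} (hn : n ≠ 0) :
    ∑ p ∈ n.divisorsAntidiagonal, (p.1.totient : K) / (p.1 * p.2 : ℕ) * x ^ (p.1 * p.2) = x ^ n := by
  have hsum : ∑ p ∈ n.divisorsAntidiagonal, (p.1.totient : K) = n := by
    rw [Nat.sum_divisorsAntidiagonal fun a _ ↦ (a.totient : K)]
    exact_mod_cast Nat.sum_totient n
  rw [Finset.sum_congr rfl fun p hp ↦ by rw [(Nat.mem_divisorsAntidiagonal.1 hp).1],
    ← Finset.sum_mul, ← Finset.sum_div, hsum, div_self (Nat.cast_ne_zero.2 hn), one_mul]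

theorem hasSum_totient_div_mul_pow_mul {x : ℝ} (hx : |x| < 1) (k : ℕ) :
    HasSum (fun m : ℕ ↦ (k.totient : ℝ) / (k * m : ℕ) * x ^ (k * m))
      (-((k.totient : ℝ) / k * log (1 - x ^ k))) := by
  rcases eq_or_ne k 0 with rfl | hk
  · simp
  have hlog := (hasSum_pow_div_log_of_abs_lt_one (x := x ^ k)
    (by rw [abs_pow]; exact pow_lt_one₀ (abs_nonneg x) hx hk)).mul_left ((k.totient : ℝ) / k)
  have hterm (m : ℕ) : (k.totient : ℝ) / (k * (m + 1) : ℕ) * x ^ (k * (m + 1))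
      = k.totient / k * ((x ^ k) ^ (m + 1) / (m + 1)) := by
    push_cast
    rw [pow_mul]
    field_simp
  rw [← hasSum_nat_add_iff' 1]
  simp only [hterm, Finset.sum_range_one, mul_zero, Nat.cast_zero, div_zero, zero_mul, sub_zero]
  simpa only [mul_neg] using hlog

/-- For 0 < x < 1, -∑_{k=1}^∞ (φ(k)/k) log(1 - x^k) = x/(1-x). -/
theorem totient_log_series (x : ℝ) (hx0 : 0 < x) (hx1 : x < 1) :
    -∑' k : ℕ, ((Nat.totient (k + 1) : ℝ) / (k + 1 : ℝ)) * Real.log (1 - x ^ (k + 1))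
      = x / (1 - x) := by
  set f : ℕ × ℕ → ℝ := fun p ↦ (p.1.totient : ℝ) / (p.1 * p.2 : ℕ) * x ^ (p.1 * p.2)
  have hf : 0 ≤ f := fun p ↦ by positivity
  have hf_zero : ∀ p : ℕ × ℕ, p.1 * p.2 = 0 → f p = 0 := fun p hp ↦ by
    simp only [f, hp, Nat.cast_zero, div_zero, zero_mul]
  have hgeom : HasSum (fun n : ℕ ↦ ∑ p ∈ n.divisorsAntidiagonal, f p) (x / (1 - x)) := by
    rw [← hasSum_nat_add_iff' 1]
    simp only [f, sum_divisorsAntidiagonal_totient_div_mul_pow x (Nat.succ_ne_zero _)]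
    simpa [pow_succ', div_eq_mul_inv] using (hasSum_geometric_of_lt_one hx0.le hx1).mul_left x
  have hseries := (hasSum_of_hasSum_sum_divisorsAntidiagonal hf hf_zero hgeom).prod_fiberwise
    (hasSum_totient_div_mul_pow_mul (abs_lt.2 ⟨by linarith, hx1⟩))
  rw [← hasSum_nat_add_iff' 1] at hseries
  simp only [Finset.sum_range_one, Nat.totient_zero, Nat.cast_zero, zero_div, zero_mul, neg_zero,
    sub_zero] at hseries
  push_cast at hseries
  rw [← tsum_neg, hseries.tsum_eq]
end

section
/- For every real number x with 0 < x < 1, we have - ∑_{k=1}^{∞} (μ(k)/k) · log(1 - x^k) = x. -/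
/-!
Expanding `-log (1 - x ^ k) = ∑ₙ x ^ (k n) / n` turns the series into the absolutely convergent
double series `∑_{k, n ≥ 1} μ(k) x ^ (k n) / (k n)`. Grouping its terms by `m = k n` gives
`∑ₘ (x ^ m / m) ∑_{d ∣ m} μ(d)`, and the inner sum vanishes except at `m = 1`.
-/

open Real ArithmeticFunction
open scoped ArithmeticFunction.Moebius ArithmeticFunction.zeta

theorem sum_divisorsAntidiagonal_moebius_smul {M : Type*} [AddCommGroup M] (m : ℕ) (b : M) :
    ∑ p ∈ m.divisorsAntidiagonal, μ p.1 • b = if m = 1 then b else 0 := by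
  rw [← Finset.sum_smul, Nat.sum_divisorsAntidiagonal (fun d _ => μ d), ← coe_mul_zeta_apply,
    moebius_mul_coe_zeta, one_apply]
  split_ifs <;> simp

theorem tsum_mul_fiber_moebius_smul {M : Type*} [AddCommGroup M] [TopologicalSpace M]
    {a : ℕ → M} (h0 : a 0 = 0) (m : ℕ) :
    ∑' p : (fun p : ℕ × ℕ => p.1 * p.2) ⁻¹' {m}, μ p.1.1 • a (p.1.1 * p.1.2) =
      if m = 1 then a 1 else 0 := by
  rcases eq_or_ne m 0 with rfl | hm
  · simp [show ∀ p : (fun p : ℕ × ℕ => p.1 * p.2) ⁻¹' {0}, p.1.1 * p.1.2 = 0 from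
      fun p => p.2, h0]
  have hfiber : (fun p : ℕ × ℕ => p.1 * p.2) ⁻¹' {m} = ↑m.divisorsAntidiagonal := by
    ext p; simp [hm]
  rw [hfiber, Finset.tsum_subtype' m.divisorsAntidiagonal (fun p => μ p.1 • a (p.1 * p.2))]
  rw [Finset.sum_congr rfl fun p hp => by rw [(Nat.mem_divisorsAntidiagonal.mp hp).1],
    sum_divisorsAntidiagonal_moebius_smul]
  split_ifs with h <;> simp [h]

theorem hasSum_moebius_smul_tsum_mul {E : Type*} [NormedAddCommGroup E] [CompleteSpace E]
    {a : ℕ → E} (h0 : a 0 = 0) (ha : Summable fun p : ℕ × ℕ => ‖a (p.1 * p.2)‖) :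
    HasSum (fun k => μ k • ∑' n, a (k * n)) (a 1) := by
  set F : ℕ × ℕ → E := fun p => μ p.1 • a (p.1 * p.2)
  have hF : Summable F := by
    have hμ (k : ℕ) : ‖μ k‖ ≤ 1 := by rw [Int.norm_eq_abs]; exact_mod_cast abs_moebius_le_one
    exact .of_norm_bounded ha fun p =>
      (norm_zsmul_le _ _).trans (mul_le_of_le_one_left (norm_nonneg _) (hμ p.1))
  have hrows : HasSum (fun k => μ k • ∑' n, a (k * n)) (∑' p, F p) :=
    hF.hasSum.prod_fiberwise fun k => ((ha.prod_factor k).of_norm.hasSum.const_smul _)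
  have hdiag := hF.hasSum.tsum_fiberwise (fun p => p.1 * p.2)
  simp only [F, tsum_mul_fiber_moebius_smul h0] at hdiag
  rwa [hdiag.unique (hasSum_ite_eq 1 (a 1))] at hrows

theorem hasSum_pow_div_neg_log {z : ℝ} (hz : |z| < 1) :
    HasSum (fun n : ℕ => z ^ n / n) (-log (1 - z)) := by
  refine (hasSum_nat_add_iff' 1).mp ?_
  simpa using hasSum_pow_div_log_of_abs_lt_one hz

theorem hasSum_pow_mul_div_neg_log {y : ℝ} (hy : |y| < 1) (k : ℕ) :
    HasSum (fun n : ℕ => y ^ (k * n) / ((k * n : ℕ) : ℝ)) (-log (1 - y ^ k) / k) := by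
  -- for `k = 0` both sides are junk zeros: `1 / 0 = 0` and `log 0 = 0`
  rcases eq_or_ne k 0 with rfl | hk
  · simp
  have hyk : |y ^ k| < 1 := by rw [abs_pow]; exact pow_lt_one₀ (abs_nonneg y) hy hk
  have hterm (n : ℕ) : (y ^ k) ^ n / n / k = y ^ (k * n) / ((k * n : ℕ) : ℝ) := by
    rw [pow_mul, Nat.cast_mul, div_div, mul_comm (n : ℝ)]
  simpa only [hterm] using (hasSum_pow_div_neg_log hyk).div_const (k : ℝ)

theorem norm_pow_mul_div_le {x : ℝ} (hx0 : 0 < x) (hx1 : x ≤ 1) (k n : ℕ) :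
    ‖x ^ (k * n) / ((k * n : ℕ) : ℝ)‖ ≤ x ^ k * x ^ n / x := by
  rcases Nat.eq_zero_or_pos k with rfl | hk
  · rw [zero_mul, Nat.cast_zero, div_zero, norm_zero]; positivity
  rcases Nat.eq_zero_or_pos n with rfl | hn
  · rw [mul_zero, Nat.cast_zero, div_zero, norm_zero]; positivity
  have hkn : k + n ≤ k * n + 1 := by nlinarith
  calc ‖x ^ (k * n) / ((k * n : ℕ) : ℝ)‖ ≤ x ^ (k * n) := by
        rw [Real.norm_of_nonneg (by positivity)]
        exact div_le_self (by positivity) (by exact_mod_cast Nat.mul_pos hk hn)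
    _ = x ^ (k * n + 1) / x := by rw [pow_succ, mul_div_cancel_right₀ _ hx0.ne']
    _ ≤ x ^ (k + n) / x := by
        gcongr ?_ / x; exact pow_le_pow_of_le_one hx0.le hx1 hkn
    _ = x ^ k * x ^ n / x := by rw [pow_add]

theorem summable_norm_pow_mul_div {x : ℝ} (hx0 : 0 < x) (hx1 : x < 1) :
    Summable fun p : ℕ × ℕ => ‖x ^ (p.1 * p.2) / ((p.1 * p.2 : ℕ) : ℝ)‖ := by
  have hgeo := summable_geometric_of_lt_one hx0.le hx1
  refine .of_nonneg_of_le (fun _ => norm_nonneg _)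
    (fun p => norm_pow_mul_div_le hx0 hx1.le p.1 p.2) ?_
  exact (hgeo.mul_of_nonneg hgeo (fun _ => by positivity) fun _ => by positivity).div_const x

/-- For 0 < x < 1, -∑_{k=1}^∞ (μ(k)/k) log(1 - x^k) = x. -/
theorem moebius_log_series (x : ℝ) (hx0 : 0 < x) (hx1 : x < 1) :
    -∑' k : ℕ, ((ArithmeticFunction.moebius (k + 1) : ℝ) / (k + 1 : ℝ)) *
        Real.log (1 - x ^ (k + 1)) = x := by
  have hx : |x| < 1 := by rwa [abs_of_pos hx0]
  have key := hasSum_moebius_smul_tsum_mul (a := fun m : ℕ => x ^ m / (m : ℝ)) (by simp)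
    (summable_norm_pow_mul_div hx0 hx1)
  simp only [(hasSum_pow_mul_div_neg_log hx _).tsum_eq, zsmul_eq_mul] at key
  have hshift := (hasSum_nat_add_iff' 1).mpr key
  simp only [Finset.sum_range_one, ArithmeticFunction.map_zero, Int.cast_zero, zero_mul, sub_zero,
    pow_one, Nat.cast_one, div_one] at hshift
  rw [← tsum_neg]
  refine Eq.trans ?_ hshift.tsum_eq
  congr 1 with k
  push_cast
  ring
end

section
/- We have τ = - ∑_{k=1}^{∞} (φ(k)/k) · log(1 - 1/τ^k), where τ = (1 + √5)/2 is the golden ratio. -/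
open Real

set_option maxHeartbeats 1000000

private lemma totient_log_hasSum {x : ℝ} (hx0 : 0 < x) (hx1 : x < 1) :
    HasSum (fun k : ℕ ↦ ((Nat.totient (k + 1) : ℝ) / (k + 1 : ℝ)) *
      Real.log (1 - x ^ (k + 1))) (-(x / (1 - x))) := by
  -- The double-indexed family
  set F : ℕ × ℕ → ℝ :=
    fun p ↦ (Nat.totient p.1 : ℝ) * x ^ (p.1 * p.2) / ((p.1 * p.2 : ℕ) : ℝ) with hFdef
  have hxne : x ≠ 0 := hx0.ne'
  -- Summability of F by comparison with (k x^k / x) * x^m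
  have hB : Summable (fun p : ℕ × ℕ ↦ ((p.1 : ℝ) * x ^ p.1 / x) * x ^ p.2) := by
    have h0 : Summable (fun k : ℕ ↦ (k : ℝ) ^ 1 * x ^ k) :=
      summable_pow_mul_geometric_of_norm_lt_one 1
        (by rwa [Real.norm_eq_abs, abs_of_pos hx0])
    have h1 : Summable (fun k : ℕ ↦ (k : ℝ) * x ^ k / x) := by
      simpa [pow_one] using h0.div_const x
    have h2 : Summable (fun m : ℕ ↦ x ^ m) := summable_geometric_of_lt_one hx0.le hx1
    exact Summable.mul_of_nonneg h1 h2 (fun k => by positivity) (fun m => by positivity)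
  have hFnn : ∀ p : ℕ × ℕ, 0 ≤ F p := by
    intro p; simp only [hFdef]; positivity
  have hFsum : Summable F := by
    apply Summable.of_nonneg_of_le hFnn _ hB
    rintro ⟨k, m⟩
    rcases Nat.eq_zero_or_pos k with rfl | hk
    · simp [hFdef]
    rcases Nat.eq_zero_or_pos m with rfl | hm
    · simp only [hFdef, Nat.mul_zero, Nat.cast_zero, div_zero]
      positivity
    -- k, m ≥ 1
    obtain ⟨a, rfl⟩ := Nat.exists_eq_add_of_le hk
    obtain ⟨b, rfl⟩ := Nat.exists_eq_add_of_le hm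
    have hexp : a + b + 1 ≤ (1 + a) * (1 + b) := by nlinarith
    have hpow : x ^ ((1 + a) * (1 + b)) ≤ x ^ (a + b + 1) :=
      pow_le_pow_of_le_one hx0.le hx1.le hexp
    have htot : (Nat.totient (1 + a) : ℝ) ≤ (1 + a : ℕ) := by
      exact_mod_cast Nat.totient_le _
    have hden : (1 : ℝ) ≤ ((1 + a) * (1 + b) : ℕ) := by
      exact_mod_cast Nat.one_le_iff_ne_zero.mpr (by positivity)
    have hBval : ((((1 + a : ℕ) : ℝ)) * x ^ (1 + a) / x) * x ^ (1 + b)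
        = ((1 + a : ℕ) : ℝ) * x ^ (a + b + 1) := by
      have hpe : (1 + a) + (1 + b) = (a + b + 1) + 1 := by omega
      have h2 : x ^ (1 + a) * x ^ (1 + b) = x * x ^ (a + b + 1) := by
        rw [← pow_add, hpe, pow_succ']
      calc ((((1 + a : ℕ) : ℝ)) * x ^ (1 + a) / x) * x ^ (1 + b)
          = ((1 + a : ℕ) : ℝ) * (x ^ (1 + a) * x ^ (1 + b)) / x := by ring
        _ = ((1 + a : ℕ) : ℝ) * (x * x ^ (a + b + 1)) / x := by rw [h2]
        _ = ((1 + a : ℕ) : ℝ) * x ^ (a + b + 1) := by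
            field_simp
    simp only [hFdef]
    rw [hBval]
    calc (Nat.totient (1 + a) : ℝ) * x ^ ((1 + a) * (1 + b)) / (((1 + a) * (1 + b) : ℕ) : ℝ)
        ≤ (Nat.totient (1 + a) : ℝ) * x ^ ((1 + a) * (1 + b)) := by
          apply div_le_self (by positivity) hden
      _ ≤ ((1 + a : ℕ) : ℝ) * x ^ ((1 + a) * (1 + b)) := by
          apply mul_le_mul_of_nonneg_right htot (by positivity)
      _ ≤ ((1 + a : ℕ) : ℝ) * x ^ (a + b + 1) := by
          apply mul_le_mul_of_nonneg_left hpow (by positivity)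
  -- Fiberwise sum over products: total is x / (1 - x)
  set G : ℕ → ℝ := fun n ↦ ∑' p : (fun p : ℕ × ℕ ↦ p.1 * p.2) ⁻¹' {n}, F p with hGdef
  have hGF : HasSum G (∑' p, F p) := hFsum.hasSum.tsum_fiberwise (fun p ↦ p.1 * p.2)
  have hG0 : G 0 = 0 := by
    simp only [hGdef]
    convert tsum_zero with p
    have hp : p.1.1 * p.1.2 = 0 := p.2
    simp only [hFdef]
    rw [hp]
    simp
  have hGsucc : ∀ n : ℕ, G (n + 1) = x ^ (n + 1) := by
    intro n
    simp only [hGdef]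
    have hset : (fun p : ℕ × ℕ ↦ p.1 * p.2) ⁻¹' {n + 1}
        = ((n + 1).divisorsAntidiagonal : Set (ℕ × ℕ)) := by
      ext p; simp [Nat.mem_divisorsAntidiagonal]
    rw [hset, Finset.tsum_subtype' ((n + 1).divisorsAntidiagonal) F]
    have : ∀ p ∈ (n + 1).divisorsAntidiagonal,
        F p = (Nat.totient p.1 : ℝ) * (x ^ (n + 1) / ((n + 1 : ℕ) : ℝ)) := by
      intro p hp
      have h1 : p.1 * p.2 = n + 1 := (Nat.mem_divisorsAntidiagonal.mp hp).1
      simp only [hFdef]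
      rw [h1]
      push_cast
      ring
    rw [Finset.sum_congr rfl this, ← Finset.sum_mul]
    have hsum : ∑ p ∈ (n + 1).divisorsAntidiagonal, (Nat.totient p.1 : ℝ)
        = ((n + 1 : ℕ) : ℝ) := by
      rw [Nat.sum_divisorsAntidiagonal (fun a _ => (Nat.totient a : ℝ))]
      rw [← Nat.cast_sum]
      exact_mod_cast congrArg (Nat.cast (R := ℝ)) (Nat.sum_totient (n + 1))
    rw [hsum]
    field_simp
  have hGsum : HasSum G (x / (1 - x)) := by
    have h1 : HasSum (fun n : ℕ ↦ G (n + 1)) (x / (1 - x)) := by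
      have hgeo : HasSum (fun n : ℕ ↦ x ^ n * x) ((1 - x)⁻¹ * x) :=
        (hasSum_geometric_of_lt_one hx0.le hx1).mul_right x
      have : (fun n : ℕ ↦ G (n + 1)) = fun n : ℕ ↦ x ^ n * x := by
        funext n; rw [hGsucc n, pow_succ]
      rw [this, div_eq_inv_mul]
      exact hgeo
    have := (hasSum_nat_add_iff (f := G) 1).mp h1
    simpa [hG0] using this
  have hFS : HasSum F (x / (1 - x)) := by
    have h := hFsum.hasSum
    rwa [hGF.unique hGsum] at h
  -- Fibers over each k
  set g : ℕ → ℝ := fun k ↦ (Nat.totient k : ℝ) / k * (-Real.log (1 - x ^ k)) with hgdef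
  have hfib : ∀ k : ℕ, HasSum (fun m ↦ F (k, m)) (g k) := by
    intro k
    rcases Nat.eq_zero_or_pos k with rfl | hk
    · have : (fun m : ℕ ↦ F (0, m)) = fun _ ↦ (0 : ℝ) := by
        funext m; simp [hFdef]
      rw [this, hgdef]
      simpa using hasSum_zero
    obtain ⟨a, rfl⟩ := Nat.exists_eq_add_of_le hk
    have hr : |x ^ (1 + a)| < 1 := by
      rw [abs_of_pos (pow_pos hx0 _)]
      exact pow_lt_one₀ hx0.le hx1 (by positivity)
    have h1 := (hasSum_pow_div_log_of_abs_lt_one hr).mul_left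
      ((Nat.totient (1 + a) : ℝ) / ((1 + a : ℕ) : ℝ))
    have heq : (fun m : ℕ ↦ F (1 + a, m + 1)) = fun m : ℕ ↦
        ((Nat.totient (1 + a) : ℝ) / ((1 + a : ℕ) : ℝ)) *
          ((x ^ (1 + a)) ^ (m + 1) / ((m : ℝ) + 1)) := by
      funext m
      have hk0 : ((1 + a : ℕ) : ℝ) ≠ 0 := by positivity
      have hm0 : ((m : ℝ) + 1) ≠ 0 := by positivity
      simp only [hFdef, ← pow_mul]
      push_cast
      field_simp
    rw [← heq] at h1
    have h2 := (hasSum_nat_add_iff (f := fun m ↦ F (1 + a, m)) 1).mp h1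
    have hF0 : F (1 + a, 0) = 0 := by simp [hFdef]
    rw [hgdef]
    simp only [Finset.range_one, Finset.sum_singleton, hF0, add_zero] at h2
    convert h2 using 2
  have hgsum : HasSum g (x / (1 - x)) := hFS.prod_fiberwise hfib
  have hg0 : g 0 = 0 := by simp [hgdef]
  have hshift : HasSum (fun k : ℕ ↦ g (k + 1)) (x / (1 - x)) := by
    rw [hasSum_nat_add_iff (f := g) 1]
    simpa [hg0] using hgsum
  have hfinal : (fun k : ℕ ↦ g (k + 1)) = fun k : ℕ ↦
      -(((Nat.totient (k + 1) : ℝ) / (k + 1 : ℝ)) * Real.log (1 - x ^ (k + 1))) := by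
    funext k
    rw [hgdef]
    push_cast
    ring
  rw [hfinal] at hshift
  simpa using hshift.neg

/-- τ = -∑_{k=1}^∞ (φ(k)/k) log(1 - 1/τ^k), where τ = (1+√5)/2. -/
theorem golden_totient_series :
    (1 + Real.sqrt 5) / 2 =
      -∑' k : ℕ, ((Nat.totient (k + 1) : ℝ) / (k + 1 : ℝ)) *
        Real.log (1 - 1 / ((1 + Real.sqrt 5) / 2) ^ (k + 1)) := by
  set τ : ℝ := (1 + Real.sqrt 5) / 2 with hτ
  have hs : Real.sqrt 5 ^ 2 = 5 := Real.sq_sqrt (by norm_num)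
  have hs2 : 2 < Real.sqrt 5 := by nlinarith [Real.sqrt_nonneg 5]
  have hτ1 : 1 < τ := by rw [hτ]; nlinarith
  have hτ0 : (0 : ℝ) < τ := by linarith
  set x : ℝ := 1 / τ with hx
  have hx0 : 0 < x := by rw [hx]; positivity
  have hx1 : x < 1 := by rw [hx, div_lt_one hτ0]; linarith
  have key := totient_log_hasSum hx0 hx1
  have hpow : ∀ k : ℕ, x ^ (k + 1) = 1 / τ ^ (k + 1) := by
    intro k; rw [hx, one_div_pow]
  have : HasSum (fun k : ℕ ↦ ((Nat.totient (k + 1) : ℝ) / (k + 1 : ℝ)) *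
      Real.log (1 - 1 / τ ^ (k + 1))) (-(x / (1 - x))) := by
    refine key.congr_fun fun k => by rw [hpow k]
  have htsum := this.tsum_eq
  rw [htsum]
  have hval : x / (1 - x) = τ := by
    rw [hx]
    have h1 : τ - 1 ≠ 0 := by intro h; linarith [sub_eq_zero.mp h]
    have hτsq : τ * (τ - 1) = 1 := by rw [hτ]; nlinarith
    field_simp
    nlinarith
  rw [hval, neg_neg]
end

section
/- We have 1/τ = - ∑_{k=1}^{∞} (μ(k)/k) · log(1 - 1/τ^k), where τ = (1 + √5)/2 is the golden ratio. -/
/-!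
Expanding each logarithm, `-log (1 - x ^ k) = ∑ₙ x ^ (k n) / n`, the series becomes the absolutely
convergent double sum `∑_{k,n} μ(k) x^(kn) / (kn)`. Grouping the terms by `m = k n` gives
`∑ₘ (∑_{k ∣ m} μ(k)) x^m / m`, and the inner sum vanishes unless `m = 1`, leaving `x`.
This holds for every `|x| < 1`, in particular for `x = 1/τ`.
-/

open Real ArithmeticFunction
open scoped ArithmeticFunction.Moebius

namespace ArithmeticFunction

theorem sum_divisors_moebius (n : ℕ) : ∑ d ∈ n.divisors, μ d = if n = 1 then 1 else 0 := by
  rw [← coe_mul_zeta_apply, moebius_mul_coe_zeta, one_apply]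

theorem hasSum_moebius_smul_comp_mul {E : Type*} [NormedAddCommGroup E] [CompleteSpace E]
    {c : ℕ → E} (hc : Summable fun p : ℕ+ × ℕ+ => ‖c (p.1 * p.2)‖) :
    HasSum (fun p : ℕ+ × ℕ+ => μ p.1 • c (p.1 * p.2)) (c 1) := by
  set f := fun p : ℕ+ × ℕ+ => μ p.1 • c (p.1 * p.2)
  have hf : Summable f := hc.of_norm_bounded fun p =>
    (norm_zsmul_le _ _).trans <| mul_le_of_le_one_left (norm_nonneg _) <| by
      rw [Int.norm_eq_abs]; exact_mod_cast abs_moebius_le_one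
  have hsigma : HasSum (f ∘ sigmaAntidiagonalEquivProd) (∑' p, f p) :=
    sigmaAntidiagonalEquivProd.hasSum_iff.2 hf.hasSum
  have hfibre (n : ℕ+) : HasSum (fun d : Nat.divisorsAntidiagonal n =>
      (f ∘ sigmaAntidiagonalEquivProd) ⟨n, d⟩) (if n = 1 then c 1 else 0) := by
    suffices ∑ d, (f ∘ sigmaAntidiagonalEquivProd) ⟨n, d⟩ = if n = 1 then c 1 else 0 from
      this ▸ hasSum_fintype _
    have hprod (d : Nat.divisorsAntidiagonal n) : ((sigmaAntidiagonalEquivProd ⟨n, d⟩).1 : ℕ) *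
        (sigmaAntidiagonalEquivProd ⟨n, d⟩).2 = n := divisorsAntidiagonalFactors_eq d
    have hmoebius : ∑ d : Nat.divisorsAntidiagonal n, μ (sigmaAntidiagonalEquivProd ⟨n, d⟩).1 =
        ∑ d ∈ (n : ℕ).divisors, μ d :=
      ((n : ℕ).divisorsAntidiagonal.sum_coe_sort fun d => μ d.1).trans
        (Nat.sum_divisorsAntidiagonal fun a _ => μ a)
    simp only [Function.comp_apply, f, hprod, ← Finset.sum_smul, hmoebius, sum_divisors_moebius,
      PNat.coe_eq_one_iff]
    split_ifs with h <;> simp [h]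
  have htsum : ∑' p, f p = c 1 := (hsigma.sigma hfibre).unique (hasSum_ite_eq 1 (c 1))
  exact htsum ▸ hf.hasSum

end ArithmeticFunction

theorem hasSum_moebius_div_mul_neg_log_one_sub_pow {x : ℝ} (hx : |x| < 1) :
    HasSum (fun k : ℕ+ => (μ k : ℝ) / k * -log (1 - x ^ (k : ℕ))) x := by
  set c : ℕ → ℝ := fun m => x ^ m / m
  have hc : Summable fun p : ℕ+ × ℕ+ => ‖c (p.1 * p.2)‖ := by
    refine .of_nonneg_of_le (fun _ => norm_nonneg _) (fun p => ?_)
      (by simpa using summable_prod_mul_pow 0 (r := |x|) (by rwa [norm_abs_eq_norm]))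
    rw [norm_div, norm_pow, Real.norm_eq_abs]
    exact div_le_self (by positivity) (by exact_mod_cast (one_le : 1 ≤ p.1 * p.2))
  have hrow (k : ℕ+) : HasSum (fun n : ℕ+ => μ k • c (k * n))
      ((μ k : ℝ) / k * -log (1 - x ^ (k : ℕ))) := by
    have hxk : |x ^ (k : ℕ)| < 1 := by
      rw [abs_pow]; exact pow_lt_one₀ (abs_nonneg x) hx k.ne_zero
    have hlog : HasSum (fun n : ℕ+ => (x ^ (k : ℕ)) ^ (n : ℕ) / n) (-log (1 - x ^ (k : ℕ))) :=
      hasSum_pnat_iff_hasSum_succ (f := fun n : ℕ => (x ^ (k : ℕ)) ^ n / n).2 <| by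
        push_cast; exact hasSum_pow_div_log_of_abs_lt_one hxk
    have hterm (n : ℕ+) : μ k • c (k * n) = (μ k : ℝ) / k * ((x ^ (k : ℕ)) ^ (n : ℕ) / n) := by
      simp only [c, zsmul_eq_mul, Nat.cast_mul, pow_mul]
      field_simp
    simpa only [hterm] using hlog.mul_left ((μ k : ℝ) / k)
  simpa [c] using (hasSum_moebius_smul_comp_mul hc).prod_fiberwise hrow

/-- 1/τ = -∑_{k=1}^∞ (μ(k)/k) log(1 - 1/τ^k), where τ = (1+√5)/2. -/
theorem golden_moebius_series :
    1 / ((1 + Real.sqrt 5) / 2) =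
      -∑' k : ℕ, ((ArithmeticFunction.moebius (k + 1) : ℝ) / (k + 1 : ℝ)) *
        Real.log (1 - 1 / ((1 + Real.sqrt 5) / 2) ^ (k + 1)) := by
  have hx : |1 / goldenRatio| < 1 := by
    rw [abs_of_pos (by positivity), one_div]
    exact inv_lt_one_of_one_lt₀ one_lt_goldenRatio
  have h := (hasSum_pnat_iff_hasSum_succ
    (f := fun k : ℕ => (μ k : ℝ) / k * -log (1 - (1 / goldenRatio) ^ k))).1
    (hasSum_moebius_div_mul_neg_log_one_sub_pow hx)
  push_cast [one_div_pow, mul_neg] at h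
  rw [← tsum_neg, h.tsum_eq]
end

section
/- For every real number x with 0 < x < 1, we have exp(x/(1 - x)) = ∏_{n=1}^{∞} (1 - x^n)^{-φ(n)/n}. -/
open Filter Real

/-! Taking logarithms, the product becomes
`∑_d φ(d)/d · (-log (1 - x^d)) = ∑_{d,k ≥ 1} φ(d)/d · x^(dk)/k`.
Grouping the terms of this absolutely convergent double series by `n = dk` and using
`∑_{d ∣ n} φ(d) = n` turns it into the geometric series `∑_{n ≥ 1} x^n = x/(1 - x)`. -/

theorem abs_pow_lt_one {R : Type*} [Ring R] [LinearOrder R] [IsStrictOrderedRing R] {x : R}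
    (hx : |x| < 1) {n : ℕ} (hn : n ≠ 0) : |x ^ n| < 1 := by
  rw [abs_pow]
  exact pow_lt_one₀ (abs_nonneg x) hx hn

theorem sum_divisorsAntidiagonal_totient_div_mul_pow_div {K : Type*} [Field K] [CharZero K]
    (x : K) {n : ℕ} (hn : n ≠ 0) :
    ∑ p ∈ n.divisorsAntidiagonal, (p.1.totient / p.1 : K) * (x ^ (p.1 * p.2) / p.2) =
      x ^ n := by
  have hterm : ∀ p ∈ n.divisorsAntidiagonal,
      (p.1.totient / p.1 : K) * (x ^ (p.1 * p.2) / p.2) = p.1.totient * (x ^ n / n) := by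
    rintro ⟨d, e⟩ hp
    obtain ⟨rfl, -⟩ := Nat.mem_divisorsAntidiagonal.mp hp
    have hd : (d : K) ≠ 0 := by exact_mod_cast left_ne_zero_of_mul hn
    have he : (e : K) ≠ 0 := by exact_mod_cast right_ne_zero_of_mul hn
    push_cast
    field_simp
  rw [Finset.sum_congr rfl hterm, Nat.sum_divisorsAntidiagonal (fun d _ => (d.totient : K) * _),
    ← Finset.sum_mul, ← Nat.cast_sum, Nat.sum_totient]
  field_simp

theorem hasSum_pnat_pow_of_abs_lt_one {x : ℝ} (hx : |x| < 1) :
    HasSum (fun n : ℕ+ => x ^ (n : ℕ)) (x / (1 - x)) := by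
  rw [hasSum_pnat_iff_hasSum_succ, div_eq_mul_inv]
  simpa only [pow_succ'] using (hasSum_geometric_of_abs_lt_one hx).mul_left x

noncomputable def totientLogSeries (x : ℝ) (p : ℕ+ × ℕ+) : ℝ :=
  ((p.1 : ℕ).totient / p.1 : ℝ) * (x ^ ((p.1 : ℕ) * p.2) / p.2)

theorem abs_totientLogSeries (x : ℝ) (p : ℕ+ × ℕ+) :
    |totientLogSeries x p| = totientLogSeries |x| p := by
  simp [totientLogSeries, abs_mul, abs_div]

theorem hasSum_totientLogSeries_fiber (x : ℝ) (n : ℕ+) :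
    HasSum (fun c : (n : ℕ).divisorsAntidiagonal =>
      totientLogSeries x (sigmaAntidiagonalEquivProd ⟨n, c⟩)) (x ^ (n : ℕ)) := by
  convert hasSum_fintype _
  rw [← sum_divisorsAntidiagonal_totient_div_mul_pow_div x n.ne_zero, ← Finset.sum_attach]
  rfl

theorem summable_totientLogSeries {x : ℝ} (hx : |x| < 1) : Summable (totientLogSeries x) := by
  refine .of_abs ?_
  simp only [abs_totientLogSeries]
  have hnonneg (c : Σ n : ℕ+, (n : ℕ).divisorsAntidiagonal) :
      0 ≤ totientLogSeries |x| (sigmaAntidiagonalEquivProd c) := by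
    rw [← abs_totientLogSeries]
    exact abs_nonneg _
  rw [← sigmaAntidiagonalEquivProd.summable_iff]
  refine (summable_sigma_of_nonneg hnonneg).mpr
    ⟨fun n => (hasSum_totientLogSeries_fiber |x| n).summable, ?_⟩
  convert (hasSum_pnat_pow_of_abs_lt_one ((abs_abs x).symm ▸ hx)).summable with n
  exact (hasSum_totientLogSeries_fiber |x| n).tsum_eq

theorem hasSum_totientLogSeries {x : ℝ} (hx : |x| < 1) :
    HasSum (totientLogSeries x) (x / (1 - x)) := by
  rw [← sigmaAntidiagonalEquivProd.hasSum_iff]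
  exact (hasSum_pnat_pow_of_abs_lt_one hx).sigma_of_hasSum (hasSum_totientLogSeries_fiber x)
    (sigmaAntidiagonalEquivProd.summable_iff.mpr (summable_totientLogSeries hx))

theorem hasSum_totientLogSeries_row {x : ℝ} (hx : |x| < 1) (d : ℕ+) :
    HasSum (fun k => totientLogSeries x (d, k))
      (((d : ℕ).totient / d : ℝ) * -log (1 - x ^ (d : ℕ))) := by
  refine (hasSum_pnat_iff_hasSum_succ (f := fun k : ℕ => ((d : ℕ).totient / d : ℝ) *
    (x ^ ((d : ℕ) * k) / k))).mpr ?_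
  simpa [pow_mul] using (hasSum_pow_div_log_of_abs_lt_one (abs_pow_lt_one hx d.ne_zero)).mul_left
    ((d : ℕ).totient / d : ℝ)

theorem hasSum_totient_mul_neg_log {x : ℝ} (hx : |x| < 1) :
    HasSum (fun d : ℕ+ => ((d : ℕ).totient / d : ℝ) * -log (1 - x ^ (d : ℕ)))
      (x / (1 - x)) :=
  (hasSum_totientLogSeries hx).prod_fiberwise (hasSum_totientLogSeries_row hx)

theorem hasProd_one_sub_pow_rpow_neg_totient_div {x : ℝ} (hx : |x| < 1) :
    HasProd (fun n : ℕ+ => (1 - x ^ (n : ℕ)) ^ (-((n : ℕ).totient : ℝ) / n))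
      (exp (x / (1 - x))) := by
  have hpos (n : ℕ+) : 0 < 1 - x ^ (n : ℕ) :=
    sub_pos.mpr ((le_abs_self _).trans_lt (abs_pow_lt_one hx n.ne_zero))
  refine hasProd_of_hasSum_log (fun n => rpow_pos_of_pos (hpos n) _) ?_
  convert hasSum_totient_mul_neg_log hx using 2 with n
  rw [log_rpow (hpos n)]
  ring

theorem HasProd.tendsto_prod_Icc_one {M : Type*} [CommMonoid M] [TopologicalSpace M] {f : ℕ → M}
    {a : M} (h : HasProd (fun n : ℕ+ => f n) a) :
    Tendsto (fun N => ∏ n ∈ Finset.Icc 1 N, f n) atTop (nhds a) := by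
  convert (hasProd_pnat_iff_hasProd_succ.mp h).tendsto_prod_nat using 2 with N
  rw [← Finset.Ico_add_one_right_eq_Icc, Finset.prod_Ico_eq_prod_range]
  simp [add_comm]

/-- For 0 < x < 1, exp(x/(1-x)) = ∏_{n=1}^∞ (1 - x^n)^(-φ(n)/n). -/
theorem exp_eq_totient_product (x : ℝ) (hx0 : 0 < x) (hx1 : x < 1) :
    Filter.Tendsto
      (fun N : ℕ => ∏ n ∈ Finset.Icc 1 N,
        (1 - x ^ n) ^ (-(Nat.totient n : ℝ) / (n : ℝ)))
      Filter.atTop (nhds (Real.exp (x / (1 - x)))) :=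
  (hasProd_one_sub_pow_rpow_neg_totient_div
    (abs_lt.mpr ⟨by linarith, hx1⟩)).tendsto_prod_Icc_one
end

section
/- Let f : ℕ → ℝ be a function (an arithmetic function) for which there exist constants C > 0 and d ∈ ℕ with |f(n)| ≤ C·n^d for all n ≥ 1. Then for every real number x with 0 < x < 1, we have ∏_{n=1}^{∞} (1 - x^n)^{-f(n)/n} = exp( ∑_{n=1}^{∞} ((1 * f)(n)/n) · x^n ), where (1 * f)(n) = ∑_{d | n} f(d) denotes the Dirichlet convolution of the constant function 1 with f. -/
/-!
Taking logarithms, the partial product up to `N` becomes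
`∑_{n ≤ N} (f n / n) · (-log (1 - x^n)) = ∑_{n ≤ N} ∑_{k ≥ 1} f n · x^(n k) / (n k)`.
Polynomial growth of `f` makes the double series over `n, k ≥ 1` absolutely convergent: since
`n k + 1 ≥ n + k`, it is dominated by `x⁻¹ · (C n^d x^n) · x^k`. Summing it row by row gives the
limit of the logarithms, while grouping its terms by `m = n k` gives `∑_m (∑_{n ∣ m} f n) x^m / m`.
-/

open Filter Real

theorem HasSum.sum_divisorsAntidiagonal {E : Type*} [AddCommGroup E] [UniformSpace E]
    [IsUniformAddGroup E] [CompleteSpace E] [T2Space E] {G : ℕ × ℕ → E} {a : E}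
    (hG : HasSum G a) (hG0 : ∀ p : ℕ × ℕ, p.1 * p.2 = 0 → G p = 0) :
    HasSum (fun n : ℕ ↦ ∑ p ∈ n.divisorsAntidiagonal, G p) a := by
  convert hG.tsum_fiberwise (fun p ↦ p.1 * p.2) using 2 with n
  rcases eq_or_ne n 0 with rfl | hn
  · simp only [Nat.divisorsAntidiagonal_zero, Finset.sum_empty]
    exact (tsum_congr fun p : (fun p : ℕ × ℕ ↦ p.1 * p.2) ⁻¹' {0} ↦ hG0 p p.2).trans tsum_zero
      |>.symm
  · rw [show (fun p : ℕ × ℕ ↦ p.1 * p.2) ⁻¹' {n} = n.divisorsAntidiagonal by ext; simp [hn],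
      Finset.tsum_subtype']

/-- The `k = 0` term is `y ^ 0 / 0 = 0`. -/
theorem Real.hasSum_pow_div_neg_log {y : ℝ} (hy : |y| < 1) :
    HasSum (fun k : ℕ ↦ y ^ k / k) (-log (1 - y)) := by
  rw [← hasSum_nat_add_iff' 1]
  simpa using hasSum_pow_div_log_of_abs_lt_one hy

theorem Real.prod_rpow_eq_exp_sum {ι : Type*} (s : Finset ι) {b : ι → ℝ} (e : ι → ℝ)
    (hb : ∀ i ∈ s, 0 < b i) : ∏ i ∈ s, b i ^ e i = exp (∑ i ∈ s, log (b i) * e i) := by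
  rw [exp_sum]
  exact Finset.prod_congr rfl fun i hi ↦ rpow_def_of_pos (hb i hi) _

theorem summable_abs_div_mul_pow_of_abs_le {a : ℕ → ℝ} {C : ℝ} {d : ℕ}
    (ha : ∀ n : ℕ, 1 ≤ n → |a n| ≤ C * (n : ℝ) ^ d) {x : ℝ} (hx0 : 0 ≤ x) (hx1 : x < 1) :
    Summable fun n : ℕ ↦ |a n / n| * x ^ n := by
  have hC : 0 ≤ C := by simpa using (abs_nonneg _).trans (ha 1 le_rfl)
  refine .of_nonneg_of_le (fun n ↦ by positivity) (fun n ↦ ?_)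
    ((summable_pow_mul_geometric_of_norm_lt_one d (by rwa [norm_of_nonneg hx0])).mul_left C)
  rcases Nat.eq_zero_or_pos n with rfl | hn
  · simp only [CharP.cast_eq_zero, div_zero, abs_zero, zero_mul]
    positivity
  rw [← mul_assoc]
  gcongr
  calc |a n / n| ≤ |a n| := by
        rw [abs_div, Nat.abs_cast]
        exact div_le_self (abs_nonneg _) (by exact_mod_cast hn)
    _ ≤ C * n ^ d := ha n hn

theorem summable_div_mul_pow_mul_div {a : ℕ → ℝ} {x : ℝ} (hx0 : 0 < x) (hx1 : x < 1)
    (ha : Summable fun n : ℕ ↦ |a n / n| * x ^ n) :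
    Summable fun p : ℕ × ℕ ↦ a p.1 / p.1 * (x ^ (p.1 * p.2) / p.2) := by
  refine .of_norm_bounded ((ha.mul_of_nonneg (summable_geometric_of_lt_one hx0.le hx1)
    (fun _ ↦ by positivity) (fun _ ↦ by positivity)).mul_left x⁻¹) fun ⟨n, k⟩ ↦ ?_
  rcases Nat.eq_zero_or_pos n with rfl | hn
  · simp only [CharP.cast_eq_zero, div_zero, zero_mul, norm_zero]
    positivity
  rcases Nat.eq_zero_or_pos k with rfl | hk
  · simp only [CharP.cast_eq_zero, div_zero, mul_zero, norm_zero]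
    positivity
  have hpow : x ^ (n * k) ≤ x⁻¹ * (x ^ n * x ^ k) := by
    rw [← pow_add, le_inv_mul_iff₀ hx0, ← pow_succ']
    exact pow_le_pow_of_le_one hx0.le hx1.le (by nlinarith)
  calc ‖a n / n * (x ^ (n * k) / k)‖ = |a n / n| * (x ^ (n * k) / k) := by
        rw [norm_mul, Real.norm_eq_abs, Real.norm_of_nonneg (by positivity)]
    _ ≤ |a n / n| * x ^ (n * k) := by
        gcongr
        exact div_le_self (by positivity) (by exact_mod_cast hk)
    _ ≤ |a n / n| * (x⁻¹ * (x ^ n * x ^ k)) := by gcongr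
    _ = x⁻¹ * (|a n / n| * x ^ n * x ^ k) := by ring

theorem hasSum_div_mul_pow_mul_div_neg_log (a : ℕ → ℝ) {x : ℝ} (hx0 : 0 ≤ x) (hx1 : x < 1)
    (n : ℕ) : HasSum (fun k : ℕ ↦ a n / n * (x ^ (n * k) / k)) (a n / n * -log (1 - x ^ n)) := by
  rcases eq_or_ne n 0 with rfl | hn
  · simp
  simp_rw [pow_mul]
  refine (Real.hasSum_pow_div_neg_log ?_).mul_left _
  rw [abs_of_nonneg (by positivity)]
  exact pow_lt_one₀ hx0 hx1 hn

theorem sum_divisorsAntidiagonal_div_mul_pow_mul_div (a : ℕ → ℝ) (x : ℝ) (m : ℕ) :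
    ∑ p ∈ m.divisorsAntidiagonal, a p.1 / p.1 * (x ^ (p.1 * p.2) / p.2)
      = (∑ n ∈ m.divisors, a n) / m * x ^ m := by
  rw [Finset.sum_div, Finset.sum_mul, ← Nat.sum_divisorsAntidiagonal (fun n _ ↦ a n / m * x ^ m)]
  refine Finset.sum_congr rfl fun p hp ↦ ?_
  have ⟨h1, h2⟩ := Nat.ne_zero_of_mem_divisorsAntidiagonal hp
  rw [← (Nat.mem_divisorsAntidiagonal.mp hp).1]
  push_cast
  field_simp

theorem product_eq_exp_divisor_sum_general (f : ℕ → ℝ) (C : ℝ) (d : ℕ)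
    (hf : ∀ n : ℕ, 1 ≤ n → |f n| ≤ C * (n : ℝ) ^ d)
    (x : ℝ) (hx0 : 0 < x) (hx1 : x < 1) :
    Filter.Tendsto
      (fun N : ℕ => ∏ n ∈ Finset.Icc 1 N, (1 - x ^ n) ^ (-(f n) / (n : ℝ)))
      Filter.atTop
      (nhds (Real.exp (∑' n : ℕ,
        ((∑ d ∈ Nat.divisors (n + 1), f d) / (n + 1 : ℝ)) * x ^ (n + 1)))) := by
  -- `G (n, k) = f n x^(n k) / (n k)`; division by zero makes it vanish when `n = 0` or `k = 0`.
  set G : ℕ × ℕ → ℝ := fun p ↦ f p.1 / p.1 * (x ^ (p.1 * p.2) / p.2)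
  have hG : HasSum G (∑' p, G p) :=
    (summable_div_mul_pow_mul_div hx0 hx1 (summable_abs_div_mul_pow_of_abs_le hf hx0.le hx1)).hasSum
  have hrows := hG.prod_fiberwise (hasSum_div_mul_pow_mul_div_neg_log f hx0.le hx1)
  have hdiag : HasSum (fun m : ℕ ↦ (∑ n ∈ m.divisors, f n) / m * x ^ m) (∑' p, G p) := by
    have hG0 (p : ℕ × ℕ) (hp : p.1 * p.2 = 0) : G p = 0 := by
      rcases mul_eq_zero.mp hp with h | h <;> simp [G, h]
    simpa only [G, sum_divisorsAntidiagonal_div_mul_pow_mul_div] using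
      hG.sum_divisorsAntidiagonal hG0
  rw [← hasSum_nat_add_iff' 1] at hdiag
  simp only [Finset.sum_range_one, Nat.divisors_zero, Finset.sum_empty, zero_div, zero_mul,
    sub_zero, Nat.cast_add_one] at hdiag
  rw [hdiag.tsum_eq]
  refine ((continuous_exp.tendsto _).comp
    (hrows.tendsto_sum_nat.comp (tendsto_add_atTop_nat 1))).congr fun N ↦ ?_
  have hpos (n : ℕ) (hn : n ∈ Finset.Icc 1 N) : 0 < 1 - x ^ n :=
    sub_pos.mpr (pow_lt_one₀ hx0.le hx1 (by grind))
  rw [Function.comp_apply, Function.comp_apply, Real.prod_rpow_eq_exp_sum _ _ hpos,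
    Finset.range_eq_Ico, Finset.sum_eq_sum_Ico_succ_bot N.succ_pos, Nat.succ_eq_add_one,
    Finset.Ico_add_one_right_eq_Icc]
  simp only [CharP.cast_eq_zero, div_zero, zero_mul, zero_add]
  exact congrArg exp (Finset.sum_congr rfl fun n _ ↦ by ring)

/-- For an arithmetic function `f` of polynomial growth and 0 < x < 1,
∏_{n=1}^∞ (1 - x^n)^(-f(n)/n) = exp(∑_{n=1}^∞ ((1*f)(n)/n) x^n), where
(1*f)(n) = ∑_{d ∣ n} f(d). -/
theorem product_eq_exp_divisor_sum (f : ℕ → ℝ) (C : ℝ) (hC : 0 < C) (d : ℕ)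
    (hf : ∀ n : ℕ, 1 ≤ n → |f n| ≤ C * (n : ℝ) ^ d)
    (x : ℝ) (hx0 : 0 < x) (hx1 : x < 1) :
    Filter.Tendsto
      (fun N : ℕ => ∏ n ∈ Finset.Icc 1 N, (1 - x ^ n) ^ (-(f n) / (n : ℝ)))
      Filter.atTop
      (nhds (Real.exp (∑' n : ℕ,
        ((∑ d ∈ Nat.divisors (n + 1), f d) / (n + 1 : ℝ)) * x ^ (n + 1)))) :=
  product_eq_exp_divisor_sum_general f C d hf x hx0 hx1
end

section
/- Let f : ℕ → ℝ be a function (an arithmetic function) for which there exist constants C > 0 and d ∈ ℕ with |f(n)| ≤ C·n^d for all n ≥ 1. Then for every real number x with 0 < x < 1, we have - ∑_{k=1}^{∞} (f(k)/k) · log(1 - x^k) = ∑_{n=1}^{∞} ((1 * f)(n)/n) · x^n, where (1 * f)(n) = ∑_{d | n} f(d) denotes the Dirichlet convolution of the constant function 1 with f. -/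
/-! Expanding `-log (1 - x ^ k) = ∑_{j ≥ 1} x ^ (k j) / j` turns the left side into the double
series `∑_{k, j ≥ 1} f k / (k j) * x ^ (k j)`. Since `k j ≥ k + j - 1`, it is dominated by
`|f k| |x| ^ k * |x| ^ (j - 1)`, hence absolutely summable, and regrouping it along the fibres
`k j = n` of multiplication produces the divisor sums. -/

open Real

lemma PNat.add_sub_one_le_mul (k j : ℕ+) : (k : ℕ) + (j - 1 : ℕ) ≤ k * j := by
  obtain ⟨i, hi⟩ : ∃ i, (j : ℕ) = i + 1 := Nat.exists_eq_add_one.mpr j.pos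
  rw [hi, Nat.add_sub_cancel, mul_add_one, add_comm]
  exact Nat.add_le_add_right (Nat.le_mul_of_pos_left i k.pos) k

section

variable (f : ℕ → ℝ) {x : ℝ}

lemma summable_abs_mul_pow_of_abs_le_mul_pow {C : ℝ} {d : ℕ}
    (hf : ∀ n : ℕ, 1 ≤ n → |f n| ≤ C * (n : ℝ) ^ d) (hx : |x| < 1) :
    Summable fun k : ℕ+ => |f k| * |x| ^ (k : ℕ) := by
  have hmajorant : Summable fun k : ℕ => C * ((k : ℝ) ^ d * |x| ^ k) :=
    (summable_pow_mul_geometric_of_norm_lt_one d (by rwa [Real.norm_eq_abs, abs_abs])).mul_left C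
  refine (hmajorant.comp_injective PNat.coe_injective).of_nonneg_of_le (fun _ => by positivity)
    fun k => ?_
  rw [Function.comp_apply, ← mul_assoc]
  exact mul_le_mul_of_nonneg_right (hf k k.pos) (by positivity)

lemma summable_div_mul_pow_mul (hx : |x| < 1)
    (hfx : Summable fun k : ℕ+ => |f k| * |x| ^ (k : ℕ)) :
    Summable fun p : ℕ+ × ℕ+ => f p.1 / (p.1 * p.2 : ℕ) * x ^ (p.1 * p.2 : ℕ) := by
  have hgeom : Summable fun j : ℕ+ => |x| ^ (j - 1 : ℕ) :=
    (summable_pnat_iff_summable_succ (f := fun j => |x| ^ (j - 1))).mpr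
      (by simpa using summable_geometric_of_lt_one (abs_nonneg x) hx)
  refine .of_norm_bounded (hfx.mul_of_nonneg hgeom (fun _ => by positivity)
    (fun _ => by positivity)) fun p => ?_
  have hdiv : |f p.1| / ((p.1 * p.2 : ℕ) : ℝ) ≤ |f p.1| :=
    div_le_self (abs_nonneg _) (by exact_mod_cast Nat.mul_pos p.1.pos p.2.pos)
  calc ‖f p.1 / (p.1 * p.2 : ℕ) * x ^ (p.1 * p.2 : ℕ)‖
      = |f p.1| / ((p.1 * p.2 : ℕ) : ℝ) * |x| ^ (p.1 * p.2 : ℕ) := by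
        rw [Real.norm_eq_abs, abs_mul, abs_div, abs_pow, Nat.abs_cast]
    _ ≤ |f p.1| * (|x| ^ (p.1 : ℕ) * |x| ^ (p.2 - 1 : ℕ)) := by
        rw [← pow_add]
        have hpow := pow_le_pow_of_le_one (abs_nonneg x) hx.le (PNat.add_sub_one_le_mul p.1 p.2)
        exact mul_le_mul hdiv hpow (by positivity) (abs_nonneg _)
    _ = |f p.1| * |x| ^ (p.1 : ℕ) * |x| ^ (p.2 - 1 : ℕ) := (mul_assoc _ _ _).symm

lemma hasSum_div_mul_pow_mul_neg_log (hx : |x| < 1) (k : ℕ+) :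
    HasSum (fun j : ℕ+ => f k / (k * j : ℕ) * x ^ (k * j : ℕ))
      (f k / k * -log (1 - x ^ (k : ℕ))) := by
  have hxk : |x ^ (k : ℕ)| < 1 := by
    rw [abs_pow]; exact pow_lt_one₀ (abs_nonneg x) hx k.ne_zero
  refine hasSum_pnat_iff_hasSum_succ (f := fun j => f k / (k * j : ℕ) * x ^ (k * j : ℕ)) |>.mpr ?_
  have h := (hasSum_pow_div_log_of_abs_lt_one hxk).mul_left (f k / k)
  refine h.congr_fun fun j => ?_
  push_cast
  rw [pow_mul]
  field_simp

lemma sum_divisorsAntidiagonal_div_mul_pow (n : ℕ) :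
    ∑ p ∈ n.divisorsAntidiagonal, f p.1 / (p.1 * p.2 : ℕ) * x ^ (p.1 * p.2 : ℕ)
      = (∑ d ∈ n.divisors, f d) / n * x ^ n := by
  rw [Finset.sum_div, Finset.sum_mul, ← Nat.sum_divisorsAntidiagonal (fun a _ => f a / n * x ^ n)]
  refine Finset.sum_congr rfl fun p hp => ?_
  rw [(Nat.mem_divisorsAntidiagonal.mp hp).1]

theorem tsum_div_mul_neg_log_one_sub_pow_eq_tsum_divisors (hx : |x| < 1)
    (hfx : Summable fun k : ℕ+ => |f k| * |x| ^ (k : ℕ)) :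
    ∑' k : ℕ+, f k / k * -log (1 - x ^ (k : ℕ))
      = ∑' n : ℕ+, (∑ d ∈ (n : ℕ).divisors, f d) / n * x ^ (n : ℕ) := by
  set T : ℕ+ × ℕ+ → ℝ := fun p => f p.1 / (p.1 * p.2 : ℕ) * x ^ (p.1 * p.2 : ℕ)
  have hT : Summable T := summable_div_mul_pow_mul f hx hfx
  calc ∑' k : ℕ+, f k / k * -log (1 - x ^ (k : ℕ))
      = ∑' (k : ℕ+) (j : ℕ+), T (k, j) :=
        tsum_congr fun k => (hasSum_div_mul_pow_mul_neg_log f hx k).tsum_eq.symm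
    _ = ∑' p, T p := hT.tsum_prod.symm
    _ = ∑' s : Σ n : ℕ+, (n : ℕ).divisorsAntidiagonal, T (sigmaAntidiagonalEquivProd s) :=
        (sigmaAntidiagonalEquivProd.tsum_eq T).symm
    _ = ∑' n : ℕ+, ∑' q : (n : ℕ).divisorsAntidiagonal, T (sigmaAntidiagonalEquivProd ⟨n, q⟩) :=
        (sigmaAntidiagonalEquivProd.summable_iff.mpr hT).tsum_sigma
    _ = _ := tsum_congr fun n => by
        rw [← sum_divisorsAntidiagonal_div_mul_pow, ← Finset.tsum_subtype]
        rfl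

end

theorem log_series_eq_divisor_sum_series_general (f : ℕ → ℝ) (C : ℝ) (d : ℕ)
    (hf : ∀ n : ℕ, 1 ≤ n → |f n| ≤ C * (n : ℝ) ^ d)
    (x : ℝ) (hx0 : 0 < x) (hx1 : x < 1) :
    -∑' k : ℕ, (f (k + 1) / (k + 1 : ℝ)) * Real.log (1 - x ^ (k + 1))
      = ∑' n : ℕ, ((∑ d ∈ Nat.divisors (n + 1), f d) / (n + 1 : ℝ)) * x ^ (n + 1) := by
  have hx : |x| < 1 := abs_lt.mpr ⟨by linarith, hx1⟩
  have h := tsum_div_mul_neg_log_one_sub_pow_eq_tsum_divisors f hx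
    (summable_abs_mul_pow_of_abs_le_mul_pow f hf hx)
  rw [tsum_pnat_eq_tsum_succ (f := fun k => f k / k * -log (1 - x ^ k)),
    tsum_pnat_eq_tsum_succ (f := fun n => (∑ d ∈ n.divisors, f d) / n * x ^ n)] at h
  push_cast at h
  rw [← h, ← tsum_neg]
  simp only [mul_neg]

/-- For an arithmetic function `f` of polynomial growth and 0 < x < 1,
-∑_{k=1}^∞ (f(k)/k) log(1 - x^k) = ∑_{n=1}^∞ ((1*f)(n)/n) x^n, where
(1*f)(n) = ∑_{d ∣ n} f(d). -/
theorem log_series_eq_divisor_sum_series (f : ℕ → ℝ) (C : ℝ) (hC : 0 < C) (d : ℕ)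
    (hf : ∀ n : ℕ, 1 ≤ n → |f n| ≤ C * (n : ℝ) ^ d)
    (x : ℝ) (hx0 : 0 < x) (hx1 : x < 1) :
    -∑' k : ℕ, (f (k + 1) / (k + 1 : ℝ)) * Real.log (1 - x ^ (k + 1))
      = ∑' n : ℕ, ((∑ d ∈ Nat.divisors (n + 1), f d) / (n + 1 : ℝ)) * x ^ (n + 1) :=
  log_series_eq_divisor_sum_series_general f C d hf x hx0 hx1
end
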